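/- Let a, b₁, …, b_m ∈ ℝⁿ and ε > 0. If a and b_j are ε-close to antipodal for every j = 1, …, m, then a and the average (1/m)∑_{j=1}^m b_j are ε-close to antipodal. The same statement holds with 'podal' in place of 'antipodal' throughout. -/

import Mathlib

open scoped RealInnerProductSpace

open scoped Classical in
/-- The lazy random walk matrix of a graph `G` with degree parameter `d`. -/
noncomputable def lazyWalk {n : ℕ} (G : SimpleGraph (Fin n)) (d : ℕ) :
    Matrix (Fin n) (Fin n) ℝ :=
  Matrix.of fun u v =>
    if u = v then 1 - ((G.neighborSet u).ncard : ℝ) / (2 * d)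
    else if G.Adj u v then 1 / (2 * d) else 0

/-- `G` has maximum degree at most `d`. -/
def MaxDegreeLE {n : ℕ} (G : SimpleGraph (Fin n)) (d : ℕ) : Prop :=
  ∀ v, (G.neighborSet v).ncard ≤ d

/-- `p_u^t`: the endpoint distribution of a length-`t` lazy random walk from `u`. -/
noncomputable def pvec {n : ℕ} (G : SimpleGraph (Fin n)) (d t : ℕ) (u : Fin n) :
    EuclideanSpace ℝ (Fin n) :=
  WithLp.toLp 2 (fun v => ((lazyWalk G d ^ t).mulVec fun w => if w = u then 1 else 0) v)

/-- `q_u^t = p_u^t - (1/n) 𝟙`. -/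
noncomputable def qvec {n : ℕ} (G : SimpleGraph (Fin n)) (d t : ℕ) (u : Fin n) :
    EuclideanSpace ℝ (Fin n) :=
  WithLp.toLp 2 (fun v => pvec G d t u v - 1 / n)

/-- `q_u^0 = 1_u - (1/n) 𝟙`. -/
noncomputable def qzero {n : ℕ} (u : Fin n) : EuclideanSpace ℝ (Fin n) :=
  WithLp.toLp 2 (fun v => (if v = u then 1 else 0) - 1 / n)

/-- average of `q_u^0` over `u ∈ S`. -/
noncomputable def qavg {n : ℕ} (S : Finset (Fin n)) : EuclideanSpace ℝ (Fin n) :=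
  (S.card : ℝ)⁻¹ • ∑ u ∈ S, qzero u

/-- `a` and `b` are `ε`-close to collinear. -/
def CloseCollinear {E : Type*} [NormedAddCommGroup E] [NormedSpace ℝ E]
    (ε : ℝ) (a b : E) : Prop :=
  ∃ (ea eb w : E) (s s' : ℝ),
    ‖ea‖ ≤ ε ∧ ‖eb‖ ≤ ε ∧ a + ea = s • w ∧ b + eb = s' • w

/-- `a` and `b` are `ε`-close to antipodal. -/
def CloseAntipodal {E : Type*} [NormedAddCommGroup E] [NormedSpace ℝ E]
    (ε : ℝ) (a b : E) : Prop :=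
  ∃ (ea eb w : E) (s s' : ℝ), 0 ≤ s ∧ 0 ≤ s' ∧
    ‖ea‖ ≤ ε ∧ ‖eb‖ ≤ ε ∧ a + ea = s • w ∧ b + eb = -(s' • w)

/-- `a` and `b` are `ε`-close to podal. -/
def ClosePodal {E : Type*} [NormedAddCommGroup E] [NormedSpace ℝ E]
    (ε : ℝ) (a b : E) : Prop :=
  ∃ (ea eb w : E) (s s' : ℝ), 0 ≤ s ∧ 0 ≤ s' ∧
    ‖ea‖ ≤ ε ∧ ‖eb‖ ≤ ε ∧ a + ea = s • w ∧ b + eb = s' • w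

/-- The Gram matrix `A_{u,v}` of two vectors. -/
noncomputable def gram2 {n : ℕ} (a b : EuclideanSpace ℝ (Fin n)) :
    Matrix (Fin 2) (Fin 2) ℝ :=
  !![‖a‖ ^ 2, ⟪a, b⟫; ⟪b, a⟫, ‖b‖ ^ 2]

/-- Number of edges of `G` between `S` and `C \ S` (for `S ⊆ C`). -/
noncomputable def cutEdgesIn {n : ℕ} (G : SimpleGraph (Fin n)) (C S : Finset (Fin n)) : ℕ :=
  {p : Fin n × Fin n | p.1 ∈ S ∧ p.2 ∈ C ∧ p.2 ∉ S ∧ G.Adj p.1 p.2}.ncard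

/-- Number of edges of `G` between `S` and its complement. -/
noncomputable def cutEdges {n : ℕ} (G : SimpleGraph (Fin n)) (S : Finset (Fin n)) : ℕ :=
  cutEdgesIn G Finset.univ S

/-- The cut conductance `φ_G(S) = e(S, V∖S) / (d|S|)`. -/
noncomputable def cutCond {n : ℕ} (G : SimpleGraph (Fin n)) (d : ℕ) (S : Finset (Fin n)) : ℝ :=
  (cutEdges G S : ℝ) / (d * S.card)

/-- The (inner) conductance of the induced subgraph `G[C]` is at least `φ`. -/
def InnerConductanceGE {n : ℕ} (G : SimpleGraph (Fin n)) (d : ℕ) (C : Finset (Fin n))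
    (φ : ℝ) : Prop :=
  ∀ S ⊆ C, S.Nonempty → 2 * S.card ≤ C.card →
    φ ≤ (cutEdgesIn G C S : ℝ) / (d * S.card)

/-- `G` is `(2, φ)`-clusterable. -/
def Clusterable2 {n : ℕ} (G : SimpleGraph (Fin n)) (d : ℕ) (φ : ℝ) : Prop :=
  InnerConductanceGE G d Finset.univ φ ∨
  ∃ C₁ C₂ : Finset (Fin n), C₁.Nonempty ∧ C₂.Nonempty ∧ Disjoint C₁ C₂ ∧
    C₁ ∪ C₂ = Finset.univ ∧ InnerConductanceGE G d C₁ φ ∧ InnerConductanceGE G d C₂ φ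

/-- `G` is `ε`-far from `(2, φ)`-clusterable. -/
def FarFromClusterable2 {n : ℕ} (G : SimpleGraph (Fin n)) (d : ℕ) (ε φ : ℝ) : Prop :=
  ∀ G' : SimpleGraph (Fin n), MaxDegreeLE G' d →
    ((symmDiff G.edgeSet G'.edgeSet).ncard : ℝ) ≤ ε * d * n →
    ¬ Clusterable2 G' d φ

/-- The span of the eigenvectors of `M` with eigenvalue greater than `c`. -/
noncomputable def heavySpace {n : ℕ} (M : Matrix (Fin n) (Fin n) ℝ) (c : ℝ) :
    Submodule ℝ (EuclideanSpace ℝ (Fin n)) :=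
  ⨆ μ : {μ : ℝ // c < μ}, Module.End.eigenspace (Matrix.toEuclideanLin M) (μ : ℝ)

/-- Orthogonal projection onto the span of the eigenvectors of `M` with eigenvalue
greater than `c`. -/
noncomputable def heavyProj {n : ℕ} (M : Matrix (Fin n) (Fin n) ℝ) (c : ℝ)
    (x : EuclideanSpace ℝ (Fin n)) : EuclideanSpace ℝ (Fin n) :=
  (Submodule.orthogonalProjection (heavySpace M c) x : EuclideanSpace ℝ (Fin n))

/-!
When the closed `ε`-ball around `a` misses the origin (`ε < ‖a‖`), the vectors `ε`-close to podal
to `a` are exactly `{t • x | t ≥ 0, ‖x - a‖ ≤ ε} + closedBall 0 ε`, a convex set; otherwise every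
vector is. The vectors `ε`-close to antipodal to `a` form the negative of that set, so both sets
are convex and contain the average of any of their points.
-/

open Pointwise Metric

theorem Convex.Ici_zero_smul {𝕜 E : Type*} [Field 𝕜] [LinearOrder 𝕜] [IsStrictOrderedRing 𝕜]
    [AddCommGroup E] [Module 𝕜 E] {s : Set E} (hs : Convex 𝕜 s) :
    Convex 𝕜 (Set.Ici (0 : 𝕜) • s) := by
  rintro _ ⟨t₁, ht₁, x₁, hx₁, rfl⟩ _ ⟨t₂, ht₂, x₂, hx₂, rfl⟩ α β hα hβ -
  have hα₁ : 0 ≤ α * t₁ := mul_nonneg hα ht₁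
  have hβ₂ : 0 ≤ β * t₂ := mul_nonneg hβ ht₂
  rcases (add_nonneg hα₁ hβ₂).eq_or_lt with hT | hT
  · refine ⟨0, le_rfl, x₁, hx₁, ?_⟩
    have h₁ : α * t₁ = 0 := by linarith
    have h₂ : β * t₂ = 0 := by linarith
    simp only [smul_smul, h₁, h₂, zero_smul, add_zero]
  · refine ⟨α * t₁ + β * t₂, hT.le, _, convex_iff_div.mp hs hx₁ hx₂ hα₁ hβ₂ hT, ?_⟩
    simp only [smul_add, smul_smul]
    congr 2 <;> field_simp

theorem Convex.inv_natCast_smul_sum_mem {E : Type*} [AddCommGroup E] [Module ℝ E] {s : Set E}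
    (hs : Convex ℝ s) {m : ℕ} (hm : 0 < m) {b : Fin m → E} (hb : ∀ j, b j ∈ s) :
    (m : ℝ)⁻¹ • ∑ j, b j ∈ s := by
  rw [Finset.smul_sum]
  refine hs.sum_mem (fun _ _ => by positivity) ?_ fun j _ => hb j
  simp [hm.ne']

section

variable {E : Type*} [NormedAddCommGroup E] [NormedSpace ℝ E] {ε : ℝ} {a : E}

theorem closePodal_of_norm_le (ha : ‖a‖ ≤ ε) (c : E) : ClosePodal ε a c :=
  ⟨-a, 0, c, 0, 1, le_rfl, zero_le_one, by rwa [norm_neg], by simpa using (norm_nonneg a).trans ha,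
    by simp, by simp⟩

theorem setOf_closePodal_eq (ha : ε < ‖a‖) :
    {c | ClosePodal ε a c} = Set.Ici (0 : ℝ) • closedBall a ε + closedBall 0 ε := by
  ext c
  simp only [Set.mem_ofPred_eq, Set.mem_add, Set.mem_smul, Set.mem_Ici, mem_closedBall,
    dist_eq_norm, sub_zero]
  constructor
  · rintro ⟨ea, eb, w, s, s', hs, hs', hea, heb, hw, hc⟩
    have hs₀ : s ≠ 0 := by
      rintro rfl
      rw [zero_smul, ← eq_neg_iff_add_eq_zero] at hw
      rw [hw, norm_neg] at ha
      linarith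
    refine ⟨_, ⟨s' / s, div_nonneg hs' hs, a + ea, by simpa using hea, rfl⟩, -eb,
      by rwa [norm_neg], ?_⟩
    rw [hw, smul_smul, div_mul_cancel₀ _ hs₀, ← hc, add_neg_cancel_right]
  · rintro ⟨_, ⟨t, ht, x, hx, rfl⟩, y, hy, rfl⟩
    exact ⟨x - a, -y, x, 1, t, zero_le_one, ht, hx, by rwa [norm_neg], by simp, by simp⟩

theorem convex_setOf_closePodal (ε : ℝ) (a : E) : Convex ℝ {c | ClosePodal ε a c} := by
  rcases le_or_gt ‖a‖ ε with ha | ha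
  · simpa only [closePodal_of_norm_le ha, Set.ofPred_true] using convex_univ
  · rw [setOf_closePodal_eq ha]
    exact (convex_closedBall a ε).Ici_zero_smul.add (convex_closedBall 0 ε)

theorem closeAntipodal_iff_closePodal_neg {c : E} :
    CloseAntipodal ε a c ↔ ClosePodal ε a (-c) := by
  constructor
  · rintro ⟨ea, eb, w, s, s', hs, hs', hea, heb, hw, hc⟩
    exact ⟨ea, -eb, w, s, s', hs, hs', hea, by rwa [norm_neg], hw, by rw [← neg_add, hc, neg_neg]⟩
  · rintro ⟨ea, eb, w, s, s', hs, hs', hea, heb, hw, hc⟩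
    exact ⟨ea, -eb, w, s, s', hs, hs', hea, by rwa [norm_neg], hw, by rw [← hc, neg_add, neg_neg]⟩

theorem convex_setOf_closeAntipodal (ε : ℝ) (a : E) : Convex ℝ {c | CloseAntipodal ε a c} := by
  have h : {c | CloseAntipodal ε a c} = -{c | ClosePodal ε a c} :=
    Set.ext fun _ => closeAntipodal_iff_closePodal_neg
  rw [h]
  exact (convex_setOf_closePodal ε a).neg

end

theorem stmt9_general {n m : ℕ} (hm : 0 < m) (a : EuclideanSpace ℝ (Fin n))
    (b : Fin m → EuclideanSpace ℝ (Fin n)) (ε : ℝ) :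
    ((∀ j, CloseAntipodal ε a (b j)) →
      CloseAntipodal ε a ((m : ℝ)⁻¹ • ∑ j, b j)) ∧
    ((∀ j, ClosePodal ε a (b j)) →
      ClosePodal ε a ((m : ℝ)⁻¹ • ∑ j, b j)) :=
  ⟨(convex_setOf_closeAntipodal ε a).inv_natCast_smul_sum_mem hm,
    (convex_setOf_closePodal ε a).inv_natCast_smul_sum_mem hm⟩

theorem stmt9 {n m : ℕ} (hm : 0 < m) (a : EuclideanSpace ℝ (Fin n))
    (b : Fin m → EuclideanSpace ℝ (Fin n)) (ε : ℝ) (hε : 0 < ε) :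
    ((∀ j, CloseAntipodal ε a (b j)) →
      CloseAntipodal ε a ((m : ℝ)⁻¹ • ∑ j, b j)) ∧
    ((∀ j, ClosePodal ε a (b j)) →
      ClosePodal ε a ((m : ℝ)⁻¹ • ∑ j, b j)) :=
  stmt9_general hm a b ε
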